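/- arXiv:1901.02923 — 3 statements merged into one kernel-verified Lean document; each statement's English description precedes it below -/
import Mathlib

section
/- Let u : ℝ → ℝ be differentiable with strictly decreasing derivative, let φ : ℝ → ℝ be differentiable and strictly convex with φ'(0) = 0, and let π0, f ∈ ℝ. Let q^a be a minimizer over ℝ of q ↦ π0·q − u(q), and let q^b be a minimizer over ℝ of q ↦ π0·q − u(q) + φ(f − q). Then: if q^a < f then q^a < q^b < f, and if f < q^a then f < q^b < q^a. -/
theorem stmt_1 (u φ : ℝ → ℝ) (hu : Differentiable ℝ u) (hu' : StrictAnti (deriv u))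
    (hφ : Differentiable ℝ φ) (hφc : StrictConvexOn ℝ Set.univ φ) (hφ0 : deriv φ 0 = 0)
    (π0 f : ℝ) (qa qb : ℝ)
    (hqa : ∀ q : ℝ, π0 * qa - u qa ≤ π0 * q - u q)
    (hqb : ∀ q : ℝ, π0 * qb - u qb + φ (f - qb) ≤ π0 * q - u q + φ (f - q)) :
    (qa < f → qa < qb ∧ qb < f) ∧ (f < qa → f < qb ∧ qb < qa) := by
  have hφ' : StrictMono (deriv φ) :=
    strictMonoOn_univ.1 (hφc.strictMonoOn_deriv fun x _ => (hφ x))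
  -- first-order condition at qa
  have ha : HasDerivAt (fun q => π0 * q - u q) (π0 - deriv u qa) qa :=
    ((hasDerivAt_id qa).const_mul π0).sub (hu qa).hasDerivAt |>.congr_deriv (by ring)
  have hda : π0 - deriv u qa = 0 := by
    have : IsLocalMin (fun q => π0 * q - u q) qa := by
      apply IsMinOn.isLocalMin _ (Filter.univ_mem)
      intro q _; exact hqa q
    have := this.hasDerivAt_eq_zero ha
    linarith [this]
  -- first-order condition at qb
  have hb : HasDerivAt (fun q => π0 * q - u q + φ (f - q))
      (π0 - deriv u qb - deriv φ (f - qb)) qb := by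
    have h1 : HasDerivAt (fun q : ℝ => f - q) (-1) qb := by
      simpa using (hasDerivAt_id qb).const_sub f
    have h2 : HasDerivAt (fun q => φ (f - q)) (deriv φ (f - qb) * (-1)) qb :=
      (hφ (f - qb)).hasDerivAt.comp qb h1
    exact (((hasDerivAt_id qb).const_mul π0).sub (hu qb).hasDerivAt).add h2 |>.congr_deriv
      (by ring)
  have hdb : π0 - deriv u qb - deriv φ (f - qb) = 0 := by
    have : IsLocalMin (fun q => π0 * q - u q + φ (f - q)) qb := by
      apply IsMinOn.isLocalMin _ (Filter.univ_mem)
      intro q _; exact hqb q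
    exact this.hasDerivAt_eq_zero hb
  constructor
  · intro hlt
    constructor
    · by_contra h
      push_neg at h  -- qb ≤ qa
      have h1 : π0 ≤ deriv u qb := by
        rcases eq_or_lt_of_le h with rfl | h
        · linarith
        · linarith [hu' h]
      have h2 : 0 < deriv φ (f - qb) := by
        have : (0:ℝ) < f - qb := by linarith
        calc (0:ℝ) = deriv φ 0 := hφ0.symm
          _ < deriv φ (f - qb) := hφ' this
      linarith
    · by_contra h
      push_neg at h  -- f ≤ qb
      have h1 : deriv u qb < π0 := by
        have : qa < qb := lt_of_lt_of_le hlt h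
        linarith [hu' this]
      have h2 : deriv φ (f - qb) ≤ 0 := by
        rcases eq_or_lt_of_le h with rfl | h
        · simpa using hφ0.le
        · have h3 : f - qb < 0 := by linarith
          linarith [hφ' h3]
      linarith
  · intro hlt
    constructor
    · by_contra h
      push_neg at h  -- qb ≤ f
      have h1 : π0 < deriv u qb := by
        have : qb < qa := lt_of_le_of_lt h hlt
        linarith [hu' this]
      have h2 : 0 ≤ deriv φ (f - qb) := by
        rcases eq_or_lt_of_le h with rfl | h
        · simpa using hφ0.ge
        · have h3 : (0:ℝ) < f - qb := by linarith
          linarith [hφ' h3]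
      linarith
    · by_contra h
      push_neg at h  -- qa ≤ qb
      have h1 : deriv u qb ≤ π0 := by
        rcases eq_or_lt_of_le h with rfl | h
        · linarith
        · linarith [hu' h]
      have h2 : deriv φ (f - qb) < 0 := by
        have : f - qb < 0 := by linarith
        calc deriv φ (f - qb) < deriv φ 0 := hφ' this
          _ = 0 := hφ0
      linarith
end

section
/- Let π0 ∈ ℝ, let u, φ : ℝ → ℝ be twice differentiable, and let q : ℝ → ℝ be differentiable and satisfy the first-order condition π0 − u'(q(f)) − φ'(f − q(f)) = 0 for every f ∈ ℝ. Fix f ∈ ℝ and suppose φ''(f − q(f)) ≥ 0 and u''(q(f)) < 0. Then the derivative of q at f equals φ''(f − q(f)) / (φ''(f − q(f)) − u''(q(f))), and this value α satisfies 0 ≤ α < 1. -/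
open Filter Topology

theorem deriv_mul_add_deriv_mul_one_sub_eq_zero {g h q : ℝ → ℝ} {c x : ℝ}
    (hg : DifferentiableAt ℝ g (q x)) (hh : DifferentiableAt ℝ h (x - q x))
    (hq : DifferentiableAt ℝ q x) (hfoc : ∀ᶠ y in 𝓝 x, g (q y) + h (y - q y) = c) :
    deriv g (q x) * deriv q x + deriv h (x - q x) * (1 - deriv q x) = 0 := by
  have hsum : HasDerivAt (fun y => g (q y) + h (y - q y))
      (deriv g (q x) * deriv q x + deriv h (x - q x) * (1 - deriv q x)) x :=
    (hg.hasDerivAt.comp x hq.hasDerivAt).add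
      (hh.hasDerivAt.comp x ((hasDerivAt_id x).sub hq.hasDerivAt))
  have hconst : HasDerivAt (fun y => g (q y) + h (y - q y)) 0 x :=
    (hasDerivAt_const x c).congr_of_eventuallyEq hfoc
  exact hsum.unique hconst

theorem eq_div_sub_of_mul_add_mul_one_sub_eq_zero {a b α : ℝ} (hab : b - a ≠ 0)
    (h : a * α + b * (1 - α) = 0) : α = b / (b - a) := by
  rw [eq_div_iff hab]
  linear_combination -h

theorem div_sub_mem_Ico {a b : ℝ} (ha : a < 0) (hb : 0 ≤ b) : b / (b - a) ∈ Set.Ico 0 1 := by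
  have hba : 0 < b - a := by linarith
  exact ⟨div_nonneg hb hba.le, (div_lt_one hba).2 (by linarith)⟩

theorem stmt_2_general (π0 : ℝ) (u φ q : ℝ → ℝ)
    (hu2 : Differentiable ℝ (deriv u))
    (hφ2 : Differentiable ℝ (deriv φ))
    (hq : Differentiable ℝ q)
    (hfoc : ∀ f : ℝ, π0 - deriv u (q f) - deriv φ (f - q f) = 0)
    (f : ℝ)
    (hφ'' : 0 ≤ deriv (deriv φ) (f - q f))
    (hu'' : deriv (deriv u) (q f) < 0) :
    deriv q f =
      deriv (deriv φ) (f - q f) /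
        (deriv (deriv φ) (f - q f) - deriv (deriv u) (q f)) ∧
    0 ≤ deriv q f ∧ deriv q f < 1 := by
  have hlin := deriv_mul_add_deriv_mul_one_sub_eq_zero (c := π0) (hu2 (q f))
    (hφ2 (f - q f)) (hq f) (Eventually.of_forall fun y => by linarith [hfoc y])
  have hα := eq_div_sub_of_mul_add_mul_one_sub_eq_zero (by linarith) hlin
  rw [hα]
  exact ⟨rfl, div_sub_mem_Ico hu'' hφ''⟩

theorem stmt_2 (π0 : ℝ) (u φ q : ℝ → ℝ)
    (hu : Differentiable ℝ u) (hu2 : Differentiable ℝ (deriv u))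
    (hφ : Differentiable ℝ φ) (hφ2 : Differentiable ℝ (deriv φ))
    (hq : Differentiable ℝ q)
    (hfoc : ∀ f : ℝ, π0 - deriv u (q f) - deriv φ (f - q f) = 0)
    (f : ℝ)
    (hφ'' : 0 ≤ deriv (deriv φ) (f - q f))
    (hu'' : deriv (deriv u) (q f) < 0) :
    deriv q f =
      deriv (deriv φ) (f - q f) /
        (deriv (deriv φ) (f - q f) - deriv (deriv u) (q f)) ∧
    0 ≤ deriv q f ∧ deriv q f < 1 :=
  stmt_2_general π0 u φ q hu2 hφ2 hq hfoc f hφ'' hu''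
end

section
/- Let g, φ : ℝ → ℝ be strictly convex functions and let Q : ℝ → ℝ be such that for every f ∈ ℝ, Q(f) minimizes the function q ↦ g(q) + φ(f − q) over ℝ. Then the value function V(f) := g(Q(f)) + φ(f − Q(f)) is strictly convex on ℝ. -/
theorem stmt_4 (g φ : ℝ → ℝ)
    (hg : StrictConvexOn ℝ Set.univ g) (hφ : StrictConvexOn ℝ Set.univ φ)
    (Q : ℝ → ℝ)
    (hQ : ∀ f : ℝ, ∀ q : ℝ, g (Q f) + φ (f - Q f) ≤ g q + φ (f - q)) :
    StrictConvexOn ℝ Set.univ (fun f => g (Q f) + φ (f - Q f)) := by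
  refine ⟨convex_univ, ?_⟩
  intro x _ y _ hxy a b ha hb hab
  set q : ℝ := a * Q x + b * Q y with hq
  have key : (fun f => g (Q f) + φ (f - Q f)) (a • x + b • y)
      ≤ g q + φ ((a • x + b • y) - q) := hQ _ q
  have harg : (a • x + b • y) - q = a * (x - Q x) + b * (y - Q y) := by
    simp only [smul_eq_mul, hq]; ring
  have hlt : g q + φ ((a • x + b • y) - q)
      < a * (g (Q x) + φ (x - Q x)) + b * (g (Q y) + φ (y - Q y)) := by
    rw [harg]
    by_cases hQxy : Q x = Q y
    · have hne : x - Q x ≠ y - Q y := by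
        intro h; apply hxy; have := h; rw [hQxy] at this; linarith
      have h1 : φ (a * (x - Q x) + b * (y - Q y))
          < a * φ (x - Q x) + b * φ (y - Q y) := by
        simpa using hφ.2 (Set.mem_univ _) (Set.mem_univ _) hne ha hb hab
      have h2 : g q ≤ a * g (Q x) + b * g (Q y) := by
        simpa using hg.convexOn.2 (Set.mem_univ (Q x)) (Set.mem_univ (Q y)) ha.le hb.le hab
      linarith
    · have h1 : g q < a * g (Q x) + b * g (Q y) := by
        simpa using hg.2 (Set.mem_univ _) (Set.mem_univ _) hQxy ha hb hab
      have h2 : φ (a * (x - Q x) + b * (y - Q y))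
          ≤ a * φ (x - Q x) + b * φ (y - Q y) := by
        simpa using hφ.convexOn.2 (Set.mem_univ (x - Q x)) (Set.mem_univ (y - Q y)) ha.le hb.le hab
      linarith
  calc (fun f => g (Q f) + φ (f - Q f)) (a • x + b • y)
      ≤ g q + φ ((a • x + b • y) - q) := key
    _ < a * (g (Q x) + φ (x - Q x)) + b * (g (Q y) + φ (y - Q y)) := hlt
    _ = a • (fun f => g (Q f) + φ (f - Q f)) x + b • (fun f => g (Q f) + φ (f - Q f)) y := by
        simp [smul_eq_mul]
end
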